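/- Let Σ̂ be an estimator of an N×N symmetric invertible matrix Σ with entries σ̂_{ij} and σ_{ij}, and suppose there exists C₀ > 0 such that sup_{i,j} Pr(|σ̂_{ij} − σ_{ij}| > d) ≤ exp(−C₀ T d²) for all d > 0. Then for any b_T > 0, Pr(‖Σ̂⁻¹ − Σ⁻¹‖_F > b_T) ≤ N² exp[ −C₀ T b_T² / ( N² ‖Σ⁻¹‖₂² (‖Σ⁻¹‖₂ + b_T)² ) ] + N² exp( −C₀ T / ( N² ‖Σ⁻¹‖₂² ) ). -/

import Mathlib

/-!
Let `E = Σ̂ - Σ` and `d = b / (N ‖Σ⁻¹‖₂ (‖Σ⁻¹‖₂ + b))`. By a union bound over the `N²` entries,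
some `|E i j|` exceeds `d` with probability at most `N² exp(-C₀ T d²)`; off that event
`‖E‖_F ≤ N d`. Since `D = Σ̂⁻¹ - Σ⁻¹ = -(Σ⁻¹ + D) E Σ⁻¹`, the mixed bounds
`‖A B‖_F ≤ ‖A‖₂ ‖B‖_F`, `‖A B‖_F ≤ ‖A‖_F ‖B‖₂` and `‖A‖₂ ≤ ‖A‖_F` give
`‖D‖_F ≤ ‖Σ⁻¹‖₂ ‖E‖_F (‖Σ⁻¹‖₂ + ‖D‖_F)`, which solved for `‖D‖_F` is the perturbation bound
`‖D‖_F ≤ ‖Σ⁻¹‖₂² ‖E‖_F / (1 - ‖Σ⁻¹‖₂ ‖E‖_F)`; for `‖E‖_F ≤ N d` it is at most `b`.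
-/

open MeasureTheory Matrix

noncomputable def frobNorm {m n : Type*} [Fintype m] [Fintype n] (A : Matrix m n ℝ) : ℝ :=
  Real.sqrt (∑ i, ∑ j, A i j ^ 2)

noncomputable def specNorm {m n : Type*} [Fintype m] [Fintype n] [DecidableEq n]
    (A : Matrix m n ℝ) : ℝ :=
  ‖LinearMap.toContinuousLinearMap (Matrix.toEuclideanLin A)‖

open scoped Matrix.Norms.L2Operator

section Norms

variable {l m n : Type*} [Fintype l] [Fintype m] [Fintype n]

lemma frobNorm_nonneg (A : Matrix m n ℝ) : 0 ≤ frobNorm A := Real.sqrt_nonneg _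

lemma frobNorm_sq (A : Matrix m n ℝ) : frobNorm A ^ 2 = ∑ i, ∑ j, A i j ^ 2 :=
  Real.sq_sqrt (by positivity)

lemma frobNorm_transpose (A : Matrix m n ℝ) : frobNorm Aᵀ = frobNorm A := by
  simp only [frobNorm, transpose_apply]
  rw [Finset.sum_comm]

lemma frobNorm_neg (A : Matrix m n ℝ) : frobNorm (-A) = frobNorm A := by
  simp [frobNorm]

lemma frobNorm_le_card_mul_of_abs_le {A : Matrix n n ℝ} {d : ℝ} (hd : 0 ≤ d)
    (h : ∀ i j, |A i j| ≤ d) : frobNorm A ≤ Fintype.card n * d := by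
  refine Real.sqrt_le_iff.2 ⟨by positivity, ?_⟩
  calc ∑ i, ∑ j, A i j ^ 2 ≤ ∑ _i : n, ∑ _j : n, d ^ 2 := by
        refine Finset.sum_le_sum fun i _ => Finset.sum_le_sum fun j _ => ?_
        exact sq_le_sq' (abs_le.1 (h i j)).1 (abs_le.1 (h i j)).2
    _ = (Fintype.card n * d) ^ 2 := by
        simp only [Finset.sum_const, Finset.card_univ, nsmul_eq_mul]
        ring

lemma sum_mulVec_sq_le_frobNorm_sq_mul (A : Matrix m n ℝ) (v : n → ℝ) :
    ∑ i, (A *ᵥ v) i ^ 2 ≤ frobNorm A ^ 2 * ∑ j, v j ^ 2 := by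
  rw [frobNorm_sq, Finset.sum_mul]
  exact Finset.sum_le_sum fun i _ => Finset.sum_mul_sq_le_sq_mul_sq _ _ _

variable [DecidableEq n]

lemma sum_mulVec_sq_le_l2_opNorm_sq_mul (A : Matrix m n ℝ) (v : n → ℝ) :
    ∑ i, (A *ᵥ v) i ^ 2 ≤ ‖A‖ ^ 2 * ∑ j, v j ^ 2 := by
  have h := A.l2_opNorm_mulVec (WithLp.toLp 2 v)
  rw [← sq_le_sq₀ (norm_nonneg _) (by positivity), mul_pow, EuclideanSpace.real_norm_sq_eq,
    EuclideanSpace.real_norm_sq_eq] at h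
  simpa using h

lemma l2_opNorm_le_frobNorm (A : Matrix m n ℝ) : ‖A‖ ≤ frobNorm A := by
  refine ContinuousLinearMap.opNorm_le_bound _ (frobNorm_nonneg A) fun x => ?_
  rw [← sq_le_sq₀ (norm_nonneg _) (mul_nonneg (frobNorm_nonneg A) (norm_nonneg x)), mul_pow,
    EuclideanSpace.real_norm_sq_eq, EuclideanSpace.real_norm_sq_eq]
  exact sum_mulVec_sq_le_frobNorm_sq_mul A x

lemma frobNorm_mul_le_l2_opNorm_mul (A : Matrix m n ℝ) (B : Matrix n l ℝ) :
    frobNorm (A * B) ≤ ‖A‖ * frobNorm B := by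
  rw [← sq_le_sq₀ (frobNorm_nonneg _) (mul_nonneg (norm_nonneg A) (frobNorm_nonneg B)), mul_pow,
    frobNorm_sq, frobNorm_sq, Finset.sum_comm, Finset.sum_comm (f := fun i k => B i k ^ 2),
    Finset.mul_sum]
  exact Finset.sum_le_sum fun k _ => by
    simpa [mulVec, dotProduct, mul_apply] using sum_mulVec_sq_le_l2_opNorm_sq_mul A (fun j => B j k)

lemma frobNorm_mul_le_mul_l2_opNorm [DecidableEq l] (A : Matrix m n ℝ) (B : Matrix n l ℝ) :
    frobNorm (A * B) ≤ frobNorm A * ‖B‖ := by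
  have h := frobNorm_mul_le_l2_opNorm_mul Bᵀ Aᵀ
  rwa [← transpose_mul, frobNorm_transpose, frobNorm_transpose,
    ← conjTranspose_eq_transpose_of_trivial, l2_opNorm_conjTranspose, mul_comm] at h

end Norms

section Perturbation

variable {n : Type*} [Fintype n] [DecidableEq n] {S E : Matrix n n ℝ}

lemma l2_opNorm_inv_pos [Nonempty n] (hS : IsUnit S.det) : 0 < ‖S⁻¹‖ :=
  norm_pos_iff.2 ((isUnit_iff_isUnit_det _).2 (isUnit_nonsing_inv_det S hS)).ne_zero

lemma isUnit_det_add_of_norm_inv_mul_norm_lt_one (hS : IsUnit S.det) (h : ‖S⁻¹‖ * ‖E‖ < 1) :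
    IsUnit (S + E).det := by
  have hsmall : IsUnit (1 - -(S⁻¹ * E)) :=
    isUnit_one_sub_of_norm_lt_one (by rw [norm_neg]; exact (l2_opNorm_mul _ _).trans_lt h)
  have hfactor : S + E = S * (1 - -(S⁻¹ * E)) := by
    rw [sub_neg_eq_add, Matrix.mul_add, Matrix.mul_one, ← Matrix.mul_assoc, mul_nonsing_inv S hS,
      Matrix.one_mul]
  rw [← isUnit_iff_isUnit_det, hfactor]
  exact ((isUnit_iff_isUnit_det S).2 hS).mul hsmall

lemma frobNorm_inv_add_sub_inv_le (hS : IsUnit S.det) (h : ‖S⁻¹‖ * frobNorm E < 1) :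
    frobNorm ((S + E)⁻¹ - S⁻¹) ≤ ‖S⁻¹‖ ^ 2 * frobNorm E / (1 - ‖S⁻¹‖ * frobNorm E) := by
  have hT : IsUnit (S + E).det := isUnit_det_add_of_norm_inv_mul_norm_lt_one hS <|
    (mul_le_mul_of_nonneg_left (l2_opNorm_le_frobNorm E) (norm_nonneg _)).trans_lt h
  have hD : (S + E)⁻¹ - S⁻¹ = -((S⁻¹ + ((S + E)⁻¹ - S⁻¹)) * E * S⁻¹) := by
    rw [add_sub_cancel, Matrix.inv_sub_inv <| iff_of_true
      ((isUnit_iff_isUnit_det _).2 hT) ((isUnit_iff_isUnit_det _).2 hS)]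
    noncomm_ring
  set K := ‖S⁻¹‖
  set D := (S + E)⁻¹ - S⁻¹
  have hf := frobNorm_nonneg E
  have key : frobNorm D ≤ (K + frobNorm D) * frobNorm E * K :=
    calc frobNorm D = frobNorm ((S⁻¹ + D) * E * S⁻¹) := by conv_lhs => rw [hD, frobNorm_neg]
      _ ≤ frobNorm ((S⁻¹ + D) * E) * K := frobNorm_mul_le_mul_l2_opNorm _ _
      _ ≤ ‖S⁻¹ + D‖ * frobNorm E * K := by gcongr; exact frobNorm_mul_le_l2_opNorm_mul _ _
      _ ≤ (K + frobNorm D) * frobNorm E * K := by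
          gcongr; linarith [norm_add_le S⁻¹ D, l2_opNorm_le_frobNorm D]
  rw [le_div_iff₀ (by linarith)]
  linarith

lemma frobNorm_inv_add_sub_inv_le_of_mul_le (hS : IsUnit S.det) {b : ℝ} (hb : 0 < b)
    (h : ‖S⁻¹‖ * (‖S⁻¹‖ + b) * frobNorm E ≤ b) : frobNorm ((S + E)⁻¹ - S⁻¹) ≤ b := by
  have hlt : ‖S⁻¹‖ * frobNorm E < 1 := by
    rcases (norm_nonneg S⁻¹).eq_or_lt with hK | hK
    · simp [← hK]
    · nlinarith
  refine (frobNorm_inv_add_sub_inv_le hS hlt).trans ?_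
  rw [div_le_iff₀ (by linarith)]
  linarith

lemma frobNorm_inv_sub_inv_le_of_abs_sub_le {A : Matrix n n ℝ} (hS : IsUnit S.det) {b : ℝ}
    (hb : 0 < b) (h : ∀ i j, |A i j - S i j| ≤ b / (Fintype.card n * ‖S⁻¹‖ * (‖S⁻¹‖ + b))) :
    frobNorm (A⁻¹ - S⁻¹) ≤ b := by
  set x := (Fintype.card n : ℝ) * ‖S⁻¹‖ * (‖S⁻¹‖ + b)
  have hE : frobNorm (A - S) ≤ Fintype.card n * (b / x) :=
    frobNorm_le_card_mul_of_abs_le (by positivity) h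
  have hbound := frobNorm_inv_add_sub_inv_le_of_mul_le hS hb (E := A - S) <|
    calc ‖S⁻¹‖ * (‖S⁻¹‖ + b) * frobNorm (A - S)
        ≤ ‖S⁻¹‖ * (‖S⁻¹‖ + b) * (Fintype.card n * (b / x)) := by gcongr
      _ = x * (b / x) := by ring
      _ ≤ b := by
          rcases eq_or_ne x 0 with hx | hx
          · simpa [hx] using hb.le
          · rw [mul_div_cancel₀ _ hx]
  rwa [add_sub_cancel] at hbound

end Perturbation

lemma measure_iUnion₂_le_ofReal_card_mul {Ω ι κ : Type*} [MeasurableSpace Ω] [Fintype ι]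
    [Fintype κ] (μ : Measure Ω) {s : ι → κ → Set Ω} {c : ℝ}
    (h : ∀ i j, μ (s i j) ≤ ENNReal.ofReal c) :
    μ (⋃ i, ⋃ j, s i j) ≤ ENNReal.ofReal (Fintype.card ι * Fintype.card κ * c) :=
  calc μ (⋃ i, ⋃ j, s i j) ≤ ∑ i, ∑ j, μ (s i j) :=
        (measure_iUnion_fintype_le μ _).trans
          (Finset.sum_le_sum fun i _ => measure_iUnion_fintype_le μ _)
    _ ≤ ∑ _i : ι, ∑ _j : κ, ENNReal.ofReal c := by gcongr with i _ j _; exact h i j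
    _ = ENNReal.ofReal (Fintype.card ι * Fintype.card κ * c) := by
        rw [ENNReal.ofReal_mul (by positivity)]
        simp [mul_assoc]

theorem stmt_17_general {Ω : Type*} [MeasurableSpace Ω] (μ : Measure Ω)
    {N : ℕ} (S : Matrix (Fin N) (Fin N) ℝ) (hS_inv : IsUnit S.det)
    (Shat : Ω → Matrix (Fin N) (Fin N) ℝ) (C₀ : ℝ) (T : ℕ)
    (htail : ∀ d > (0 : ℝ), ∀ i j,
      μ {ω | d < |Shat ω i j - S i j|} ≤ ENNReal.ofReal (Real.exp (-C₀ * (T : ℝ) * d ^ 2))) :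
    ∀ b > (0 : ℝ),
      μ {ω | b < frobNorm ((Shat ω)⁻¹ - S⁻¹)} ≤
        ENNReal.ofReal ((N : ℝ) ^ 2 * Real.exp (-C₀ * (T : ℝ) * b ^ 2 /
            ((N : ℝ) ^ 2 * specNorm S⁻¹ ^ 2 * (specNorm S⁻¹ + b) ^ 2))) +
        ENNReal.ofReal ((N : ℝ) ^ 2 * Real.exp (-C₀ * (T : ℝ) /
            ((N : ℝ) ^ 2 * specNorm S⁻¹ ^ 2))) := by
  intro b hb
  set K := specNorm S⁻¹
  set d := b / (N * K * (K + b)) with hd_def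
  have hd : Fin N → 0 < d := fun i =>
    have : Nonempty (Fin N) := ⟨i⟩
    have hK : 0 < K := l2_opNorm_inv_pos hS_inv
    have hN : (0 : ℝ) < N := Nat.cast_pos.2 i.pos
    by positivity
  have hsub : {ω | b < frobNorm ((Shat ω)⁻¹ - S⁻¹)} ⊆
      ⋃ i, ⋃ j, {ω | d < |Shat ω i j - S i j|} := by
    intro ω hω
    by_contra hsmall
    simp only [Set.mem_iUnion, not_exists] at hsmall
    refine hω.not_ge <| frobNorm_inv_sub_inv_le_of_abs_sub_le hS_inv hb fun i j => ?_
    rw [Fintype.card_fin]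
    exact not_lt.1 (hsmall i j)
  calc μ {ω | b < frobNorm ((Shat ω)⁻¹ - S⁻¹)}
      ≤ μ (⋃ i, ⋃ j, {ω | d < |Shat ω i j - S i j|}) := measure_mono hsub
    _ ≤ ENNReal.ofReal (Fintype.card (Fin N) * Fintype.card (Fin N) *
          Real.exp (-C₀ * T * d ^ 2)) :=
        measure_iUnion₂_le_ofReal_card_mul μ fun i j => htail d (hd i) i j
    _ = ENNReal.ofReal ((N : ℝ) ^ 2 * Real.exp (-C₀ * T * b ^ 2 /
          ((N : ℝ) ^ 2 * K ^ 2 * (K + b) ^ 2))) := by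
        rw [Fintype.card_fin, ← sq]
        congr 3
        rw [hd_def, div_pow, mul_pow, mul_pow]
        ring
    _ ≤ _ := le_self_add

theorem stmt_17 {Ω : Type*} [MeasurableSpace Ω] (μ : Measure Ω) [IsProbabilityMeasure μ]
    {N : ℕ} (S : Matrix (Fin N) (Fin N) ℝ) (hS_symm : S.IsSymm) (hS_inv : IsUnit S.det)
    (Shat : Ω → Matrix (Fin N) (Fin N) ℝ) (C₀ : ℝ) (hC₀ : 0 < C₀) (T : ℕ)
    (htail : ∀ d > (0 : ℝ), ∀ i j,
      μ {ω | d < |Shat ω i j - S i j|} ≤ ENNReal.ofReal (Real.exp (-C₀ * (T : ℝ) * d ^ 2))) :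
    ∀ b > (0 : ℝ),
      μ {ω | b < frobNorm ((Shat ω)⁻¹ - S⁻¹)} ≤
        ENNReal.ofReal ((N : ℝ) ^ 2 * Real.exp (-C₀ * (T : ℝ) * b ^ 2 /
            ((N : ℝ) ^ 2 * specNorm S⁻¹ ^ 2 * (specNorm S⁻¹ + b) ^ 2))) +
        ENNReal.ofReal ((N : ℝ) ^ 2 * Real.exp (-C₀ * (T : ℝ) /
            ((N : ℝ) ^ 2 * specNorm S⁻¹ ^ 2))) :=
  stmt_17_general μ S hS_inv Shat C₀ T htail
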